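/- Let T and F be nonnegative n×n matrices with ρ(T) < 1. Set r = ρ(T+F), Q = F(I−T)^{-1}, and R₀ = ρ(Q). Then one of the following holds: r = R₀ = 1, or 1 < r ≤ R₀, or 0 ≤ R₀ ≤ r < 1. -/

import Mathlib

open Matrix Filter Topology

noncomputable def specRad {n : ℕ} (A : Matrix (Fin n) (Fin n) ℝ) : ℝ :=
  (spectralRadius ℂ (A.map Complex.ofReal)).toReal

def MatIrred {n : ℕ} (A : Matrix (Fin n) (Fin n) ℝ) : Prop :=
  ∀ i j, ∃ k : ℕ, 0 < k ∧ 0 < (A ^ k) i j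

def MatPrimitive {n : ℕ} (A : Matrix (Fin n) (Fin n) ℝ) : Prop :=
  ∃ k : ℕ, 0 < k ∧ ∀ i j, 0 < (A ^ k) i j

/-!
For a nonnegative matrix `A` and `s > 0`, `ρ(A) < s` iff `A x < s x` entrywise for some
positive vector `x`: Gelfand's formula gives one direction, and `x = ∑ₘ (s⁻¹ A)ᵐ 1` the other.
With `S = (1 - T)⁻¹ = ∑ₘ Tᵐ` and `Q = F S`, such vectors move between `T + F` and `Q`:
`x ↦ (1 - T) x` turns `(T + F) x < s x` into `Q y < s y` when `s ≤ 1`, and `y ↦ S y` goes back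
when `s ≥ 1`. Hence `R₀ ≤ r` if `r < 1` and `r ≤ R₀` if `r ≥ 1`.
It remains to see `R₀ ≤ 1` when `r = 1`, a continuity statement in disguise. A partial sum
`∑_{m<N} Tᵐ` dominates `c S` entrywise for a given `c < 1`, and then for `s > 1` the vector
`z = s x - T x` built from `(T + F) x < s x` satisfies `Q z < c⁻¹ sᴺ z`.
-/

open scoped ENNReal

attribute [local instance] Matrix.linftyOpNormedRing Matrix.linftyOpNormedAlgebra

lemma HasSum.mul_one_sub_of_pow {R : Type*} [Ring R] [TopologicalSpace R] [IsTopologicalRing R]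
    [T2Space R] {a S : R} (h : HasSum (a ^ ·) S) : S * (1 - a) = 1 :=
  h.tsum_eq ▸ h.summable.tsum_pow_mul_one_sub

lemma HasSum.mul_eq_sub_one_of_pow {R : Type*} [Ring R] [TopologicalSpace R]
    [IsTopologicalRing R] [T2Space R] {a S : R} (h : HasSum (a ^ ·) S) : a * S = S - 1 := by
  have h1 := h.tsum_eq ▸ h.summable.one_sub_mul_tsum_pow
  rw [sub_mul, one_mul, sub_eq_iff_eq_add'] at h1
  exact eq_sub_of_add_eq h1.symm

lemma exists_mem_Ioo_forall_le_mul {ι : Type*} [Finite ι] {u v : ι → ℝ} {s : ℝ} (hs : 0 < s)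
    (h : ∀ i, u i < s * v i) : ∃ θ ∈ Set.Ioo 0 s, ∀ i, u i ≤ θ * v i := by
  have h' : ∀ i, ∀ᶠ θ in 𝓝 s, u i < θ * v i :=
    fun i => (tendsto_id.mul_const (v i)).eventually_const_lt (h i)
  obtain ⟨θ, hθuv, hθ⟩ :=
    (((eventually_all.2 h').filter_mono nhdsWithin_le_nhds).and (Ioo_mem_nhdsLT hs)).exists
  exact ⟨θ, hθ, fun i => (hθuv i).le⟩

namespace Matrix

lemma exists_smul_le_sum_range {m k : Type*} [Finite m] [Finite k] {f : ℕ → Matrix m k ℝ}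
    {S : Matrix m k ℝ} (hf : ∀ l i j, 0 ≤ f l i j) (hS : HasSum f S) {c : ℝ} (hc : c < 1) :
    ∃ N, ∀ i j, c * S i j ≤ (∑ l ∈ Finset.range N, f l) i j := by
  have h : ∀ i j, ∀ᶠ N in atTop, c * S i j ≤ (∑ l ∈ Finset.range N, f l) i j := by
    intro i j
    have hij : HasSum (fun l => f l i j) (S i j) := Pi.hasSum.1 (Pi.hasSum.1 hS i) j
    simp only [sum_apply]
    rcases (hij.nonneg fun l => hf l i j).eq_or_lt with h0 | hpos
    · rw [← h0, mul_zero]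
      exact .of_forall fun N => Finset.sum_nonneg fun l _ => hf l i j
    · filter_upwards [hij.tendsto_sum_nat.eventually_const_lt (by nlinarith : c * S i j < S i j)]
        with N hN using hN.le
  exact (eventually_all.2 fun i => eventually_all.2 (h i)).exists

variable {m k : Type*} [Fintype k]

lemma mulVec_nonneg_of_nonneg {A : Matrix m k ℝ} (hA : ∀ i j, 0 ≤ A i j) {x : k → ℝ}
    (hx : 0 ≤ x) : 0 ≤ A *ᵥ x :=
  fun i => (Finset.sum_nonneg fun j _ => mul_nonneg (hA i j) (hx j) : 0 ≤ ∑ j, A i j * x j)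

lemma mulVec_mono_of_nonneg {A : Matrix m k ℝ} (hA : ∀ i j, 0 ≤ A i j) {x y : k → ℝ}
    (h : x ≤ y) : A *ᵥ x ≤ A *ᵥ y := by
  simpa [mulVec_sub] using mulVec_nonneg_of_nonneg hA (sub_nonneg.2 h)

lemma mulVec_le_mulVec_of_le {A B : Matrix m k ℝ} (h : ∀ i j, A i j ≤ B i j) {x : k → ℝ}
    (hx : 0 ≤ x) : A *ᵥ x ≤ B *ᵥ x := by
  simpa [sub_mulVec] using
    mulVec_nonneg_of_nonneg (A := B - A) (fun i j => sub_nonneg.2 (h i j)) hx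

lemma mul_apply_nonneg_of_nonneg {A : Matrix m k ℝ} {B : Matrix k m ℝ} (hA : ∀ i j, 0 ≤ A i j)
    (hB : ∀ i j, 0 ≤ B i j) (i j : m) : 0 ≤ (A * B) i j := by
  rw [mul_apply]
  exact Finset.sum_nonneg fun l _ => mul_nonneg (hA i l) (hB l j)

lemma apply_nonneg_of_hasSum_pow [DecidableEq k] {T S : Matrix k k ℝ} (hT : ∀ i j, 0 ≤ T i j)
    (hS : HasSum (T ^ ·) S) (i j : k) : 0 ≤ S i j :=
  (Pi.hasSum.1 (Pi.hasSum.1 hS i) j).nonneg fun m => pow_apply_nonneg hT m i j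

lemma pow_mulVec_le_of_mulVec_le [DecidableEq k] {A : Matrix k k ℝ} (hA : ∀ i j, 0 ≤ A i j)
    {x : k → ℝ} {θ : ℝ} (hθ : 0 ≤ θ) (h : A *ᵥ x ≤ θ • x) (N : ℕ) :
    A ^ N *ᵥ x ≤ θ ^ N • x := by
  induction N with
  | zero => simp
  | succ N ih =>
    calc A ^ (N + 1) *ᵥ x = A *ᵥ (A ^ N *ᵥ x) := by rw [pow_succ', mulVec_mulVec]
      _ ≤ A *ᵥ (θ ^ N • x) := mulVec_mono_of_nonneg hA ih
      _ = θ ^ N • (A *ᵥ x) := mulVec_smul _ _ _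
      _ ≤ θ ^ (N + 1) • x := by
        rw [pow_succ, mul_smul]
        exact smul_le_smul_of_nonneg_left h (pow_nonneg hθ N)

/-- With `z = s x - T x`, the sum telescopes: `∑_{m<N} s^(N-1-m) Tᵐ z = sᴺ x - Tᴺ x`. -/
lemma sum_range_pow_mulVec_le [DecidableEq k] {T : Matrix k k ℝ} (hT : ∀ i j, 0 ≤ T i j)
    {x : k → ℝ} (hx : 0 ≤ x) {s : ℝ} (hs : 1 ≤ s) (hz : 0 ≤ s • x - T *ᵥ x) (N : ℕ) :
    (∑ m ∈ Finset.range N, T ^ m) *ᵥ (s • x - T *ᵥ x) ≤ s ^ N • x := by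
  set z := s • x - T *ᵥ x
  have key : ∀ N, (∑ m ∈ Finset.range N, T ^ m) *ᵥ z + T ^ N *ᵥ x ≤ s ^ N • x := by
    intro N
    induction N with
    | zero => simp
    | succ N ih =>
      have hP : 0 ≤ (∑ m ∈ Finset.range N, T ^ m) *ᵥ z := mulVec_nonneg_of_nonneg
        (fun i j => by simpa [sum_apply] using
          Finset.sum_nonneg fun m _ => pow_apply_nonneg hT m i j) hz
      have hTz : T ^ N *ᵥ z = s • (T ^ N *ᵥ x) - T ^ (N + 1) *ᵥ x := by
        rw [mulVec_sub, mulVec_smul, mulVec_mulVec, ← pow_succ]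
      calc (∑ m ∈ Finset.range (N + 1), T ^ m) *ᵥ z + T ^ (N + 1) *ᵥ x
          = (∑ m ∈ Finset.range N, T ^ m) *ᵥ z + s • (T ^ N *ᵥ x) := by
            rw [Finset.sum_range_succ, add_mulVec, hTz]
            abel
        _ ≤ s • ((∑ m ∈ Finset.range N, T ^ m) *ᵥ z + T ^ N *ᵥ x) := by
            rw [smul_add]
            gcongr
            exact le_smul_of_one_le_left hP hs
        _ ≤ s ^ (N + 1) • x := by
            rw [pow_succ', mul_smul]
            exact smul_le_smul_of_nonneg_left ih (by linarith)
  exact (le_add_of_nonneg_right (mulVec_nonneg_of_nonneg (pow_apply_nonneg hT N) hx)).trans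
    (key N)

end Matrix

variable {n : ℕ}

lemma specRad_nonneg (A : Matrix (Fin n) (Fin n) ℝ) : 0 ≤ specRad A := ENNReal.toReal_nonneg

lemma nnnorm_map_ofReal_pow (A : Matrix (Fin n) (Fin n) ℝ) (k : ℕ) :
    ‖A.map Complex.ofReal ^ k‖₊ = ‖A ^ k‖₊ := by
  have h : (A ^ k).map Complex.ofReal = A.map Complex.ofReal ^ k :=
    Complex.ofRealHom.mapMatrix.map_pow A k
  rw [← h]
  simp [linfty_opNNNorm_def]

lemma nnnorm_one_le : ‖(1 : Matrix (Fin n) (Fin n) ℂ)‖₊ ≤ 1 := by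
  rw [← diagonal_one, linfty_opNNNorm_diagonal]
  exact pi_nnnorm_le_iff.2 fun _ => nnnorm_one.le

lemma spectralRadius_map_ofReal_le (A : Matrix (Fin n) (Fin n) ℝ) (k : ℕ) :
    spectralRadius ℂ (A.map Complex.ofReal) ≤ (‖A ^ (k + 1)‖₊ : ℝ≥0∞) ^ (1 / (k + 1) : ℝ) := by
  have h := spectrum.spectralRadius_le_pow_nnnorm_pow_one_div ℂ (A.map Complex.ofReal) k
  rw [nnnorm_map_ofReal_pow] at h
  refine h.trans (mul_le_of_le_one_right' (ENNReal.rpow_le_one ?_ (by positivity)))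
  exact_mod_cast nnnorm_one_le

lemma spectralRadius_map_ofReal_ne_top (A : Matrix (Fin n) (Fin n) ℝ) :
    spectralRadius ℂ (A.map Complex.ofReal) ≠ ⊤ :=
  ((spectralRadius_map_ofReal_le A 0).trans_lt (by simp)).ne

lemma specRad_lt_of_norm_pow_lt {A : Matrix (Fin n) (Fin n) ℝ} {s : ℝ} {k : ℕ} (hs : 0 ≤ s)
    (hk : 0 < k) (h : ‖A ^ k‖ < s ^ k) : specRad A < s := by
  obtain ⟨k, rfl⟩ : ∃ j, k = j + 1 := Nat.exists_eq_succ_of_ne_zero hk.ne'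
  have hpow : (‖A ^ (k + 1)‖₊ : ℝ≥0∞) < ENNReal.ofReal s ^ ((k + 1 : ℕ) : ℝ) := by
    rw [ENNReal.rpow_natCast, ← ENNReal.ofReal_pow hs,
      ENNReal.lt_ofReal_iff_toReal_lt ENNReal.coe_ne_top]
    exact h
  refine ENNReal.toReal_lt_of_lt_ofReal ((spectralRadius_map_ofReal_le A k).trans_lt ?_)
  calc (‖A ^ (k + 1)‖₊ : ℝ≥0∞) ^ (1 / (k + 1) : ℝ)
      < (ENNReal.ofReal s ^ ((k + 1 : ℕ) : ℝ)) ^ (1 / (k + 1) : ℝ) :=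
        ENNReal.rpow_lt_rpow hpow (by positivity)
    _ = ENNReal.ofReal s := by
        rw [← ENNReal.rpow_mul, Nat.cast_add_one, mul_one_div_cancel (by positivity),
          ENNReal.rpow_one]

lemma eventually_norm_pow_lt_of_specRad_lt {A : Matrix (Fin n) (Fin n) ℝ} {s : ℝ}
    (h : specRad A < s) : ∀ᶠ m in atTop, ‖A ^ m‖ < s ^ m := by
  have hs : 0 < s := (specRad_nonneg A).trans_lt h
  rw [specRad, ← ENNReal.lt_ofReal_iff_toReal_lt (spectralRadius_map_ofReal_ne_top A)] at h
  have hlim := spectrum.pow_nnnorm_pow_one_div_tendsto_nhds_spectralRadius (A.map Complex.ofReal)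
  filter_upwards [hlim.eventually_lt_const h, eventually_gt_atTop 0] with m hm hm0
  have hm' : (‖A ^ m‖₊ : ℝ≥0∞) < ENNReal.ofReal s ^ m := by
    have := ENNReal.rpow_lt_rpow hm (by positivity : (0 : ℝ) < m)
    rwa [← ENNReal.rpow_mul, one_div_mul_cancel (by positivity), ENNReal.rpow_one,
      ENNReal.rpow_natCast, nnnorm_map_ofReal_pow] at this
  rwa [← ENNReal.ofReal_pow hs.le, ENNReal.lt_ofReal_iff_toReal_lt ENNReal.coe_ne_top] at hm'

lemma specRad_inv_smul_lt_one {A : Matrix (Fin n) (Fin n) ℝ} {s : ℝ} (h : specRad A < s) :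
    specRad (s⁻¹ • A) < 1 := by
  have hs : 0 < s := (specRad_nonneg A).trans_lt h
  obtain ⟨k, hk, hk0⟩ :=
    ((eventually_norm_pow_lt_of_specRad_lt h).and (eventually_gt_atTop 0)).exists
  refine specRad_lt_of_norm_pow_lt zero_le_one hk0 ?_
  rw [smul_pow, norm_smul, one_pow, norm_pow, norm_inv, Real.norm_of_nonneg hs.le, inv_pow,
    inv_mul_lt_one₀ (by positivity)]
  exact hk

lemma summable_pow_of_specRad_lt_one {A : Matrix (Fin n) (Fin n) ℝ} (h : specRad A < 1) :
    Summable (A ^ ·) := by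
  obtain ⟨θ, hρθ, hθ1⟩ := exists_between h
  refine .of_norm_bounded_eventually_nat
    (summable_geometric_of_lt_one ((specRad_nonneg A).trans hρθ.le) hθ1) ?_
  filter_upwards [eventually_norm_pow_lt_of_specRad_lt hρθ] with m hm using hm.le

lemma hasSum_pow_inv_one_sub {A : Matrix (Fin n) (Fin n) ℝ} (h : specRad A < 1) :
    HasSum (A ^ ·) (1 - A)⁻¹ := by
  have hA := summable_pow_of_specRad_lt_one h
  rw [inv_eq_left_inv hA.tsum_pow_mul_one_sub]
  exact hA.hasSum

lemma norm_le_sum_sum_norm (M : Matrix (Fin n) (Fin n) ℝ) : ‖M‖ ≤ ∑ i, ∑ j, ‖M i j‖ := by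
  have h : (Finset.univ.sup fun i => ∑ j, ‖M i j‖₊) ≤ ∑ i, ∑ j, ‖M i j‖₊ := Finset.sup_le
    fun i _ => Finset.single_le_sum (f := fun i => ∑ j, ‖M i j‖₊) (fun _ _ => zero_le)
      (Finset.mem_univ i)
  rw [linfty_opNorm_def]
  simpa using NNReal.coe_le_coe.2 h

lemma norm_pow_le_of_mulVec_le {A : Matrix (Fin n) (Fin n) ℝ} (hA : ∀ i j, 0 ≤ A i j)
    {x : Fin n → ℝ} (hx : ∀ i, 0 < x i) {θ : ℝ} (hθ : 0 ≤ θ) (h : A *ᵥ x ≤ θ • x) (k : ℕ) :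
    ‖A ^ k‖ ≤ θ ^ k * ∑ i, ∑ j, x i / x j := by
  refine (norm_le_sum_sum_norm _).trans ?_
  simp only [Finset.mul_sum]
  refine Finset.sum_le_sum fun i _ => Finset.sum_le_sum fun j _ => ?_
  rw [Real.norm_of_nonneg (pow_apply_nonneg hA k i j), mul_div_assoc', le_div_iff₀ (hx j)]
  calc (A ^ k) i j * x j ≤ (A ^ k *ᵥ x) i :=
        Finset.single_le_sum (f := fun l => (A ^ k) i l * x l)
          (fun l _ => mul_nonneg (pow_apply_nonneg hA k i l) (hx l).le) (Finset.mem_univ j)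
    _ ≤ θ ^ k * x i := pow_mulVec_le_of_mulVec_le hA hθ h k i

lemma specRad_lt_of_mulVec_lt {A : Matrix (Fin n) (Fin n) ℝ} (hA : ∀ i j, 0 ≤ A i j)
    {x : Fin n → ℝ} (hx : ∀ i, 0 < x i) {s : ℝ} (hs : 0 < s)
    (h : ∀ i, (A *ᵥ x) i < s * x i) : specRad A < s := by
  obtain ⟨θ, hθ, hAx⟩ := exists_mem_Ioo_forall_le_mul hs h
  set K := ∑ i, ∑ j, x i / x j
  have hlim : Tendsto (fun k => (θ / s) ^ k * K) atTop (𝓝 0) := by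
    simpa using (tendsto_pow_atTop_nhds_zero_of_lt_one (div_nonneg hθ.1.le hs.le)
      ((div_lt_one hs).2 hθ.2)).mul_const K
  obtain ⟨k, hk, hk0⟩ := ((hlim.eventually_lt_const one_pos).and (eventually_gt_atTop 0)).exists
  refine specRad_lt_of_norm_pow_lt hs.le hk0
    ((norm_pow_le_of_mulVec_le hA hx hθ.1.le hAx k).trans_lt ?_)
  rwa [div_pow, div_mul_eq_mul_div, div_lt_one (by positivity)] at hk

lemma exists_pos_mulVec_lt_of_specRad_lt {A : Matrix (Fin n) (Fin n) ℝ} (hA : ∀ i j, 0 ≤ A i j)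
    {s : ℝ} (h : specRad A < s) :
    ∃ x : Fin n → ℝ, (∀ i, 0 < x i) ∧ ∀ i, (A *ᵥ x) i < s * x i := by
  have hs : 0 < s := (specRad_nonneg A).trans_lt h
  set B := s⁻¹ • A
  have hB : ∀ i j, 0 ≤ B i j := fun i j => mul_nonneg (inv_nonneg.2 hs.le) (hA i j)
  obtain ⟨S, hS⟩ := summable_pow_of_specRad_lt_one (specRad_inv_smul_lt_one h)
  set x := S *ᵥ 1
  have hBx : B *ᵥ x = x - 1 := by
    rw [mulVec_mulVec, hS.mul_eq_sub_one_of_pow, sub_mulVec, one_mulVec]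
  have hx0 : 0 ≤ x := mulVec_nonneg_of_nonneg (apply_nonneg_of_hasSum_pow hB hS) zero_le_one
  have hBx0 : 0 ≤ B *ᵥ x := mulVec_nonneg_of_nonneg hB hx0
  have hAx : A *ᵥ x = s • (x - 1) := by
    rw [← hBx, ← smul_mulVec, smul_inv_smul₀ hs.ne']
  refine ⟨x, fun i => ?_, fun i => ?_⟩
  · have h1 := congrFun hBx i
    have h2 := hBx0 i
    simp only [Pi.sub_apply, Pi.one_apply, Pi.zero_apply] at h1 h2
    linarith
  · rw [hAx, Pi.smul_apply, Pi.sub_apply, Pi.one_apply, smul_eq_mul]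
    linarith

section Comparison

variable {T F S : Matrix (Fin n) (Fin n) ℝ} (hT : ∀ i j, 0 ≤ T i j) (hF : ∀ i j, 0 ≤ F i j)
include hT hF

lemma specRad_mul_lt_of_specRad_add_lt (hS : HasSum (T ^ ·) S) {s : ℝ} (hs : s ≤ 1)
    (h : specRad (T + F) < s) : specRad (F * S) < s := by
  have hs0 : 0 < s := (specRad_nonneg _).trans_lt h
  obtain ⟨x, hx, hTFx⟩ := exists_pos_mulVec_lt_of_specRad_lt (A := T + F)
    (fun i j => add_nonneg (hT i j) (hF i j)) h
  set y := x - T *ᵥ x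
  have hSy : S *ᵥ y = x := by
    rw [show y = (1 - T) *ᵥ x by rw [sub_mulVec, one_mulVec], mulVec_mulVec,
      hS.mul_one_sub_of_pow, one_mulVec]
  have hFy : ∀ i, (F *ᵥ x) i < s * y i := by
    intro i
    have h1 := hTFx i
    have h2 := mulVec_nonneg_of_nonneg hT (fun i => (hx i).le) i
    rw [add_mulVec, Pi.add_apply] at h1
    simp only [y, Pi.sub_apply, Pi.zero_apply] at h2 ⊢
    nlinarith
  refine specRad_lt_of_mulVec_lt
    (mul_apply_nonneg_of_nonneg hF (apply_nonneg_of_hasSum_pow hT hS)) (x := y) (fun i => ?_) hs0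
    (fun i => by rw [← mulVec_mulVec, hSy]; exact hFy i)
  exact pos_of_mul_pos_right ((mulVec_nonneg_of_nonneg hF (fun i => (hx i).le) i).trans_lt
    (hFy i)) hs0.le

lemma specRad_add_lt_of_specRad_mul_lt (hS : HasSum (T ^ ·) S) {s : ℝ} (hs : 1 ≤ s)
    (h : specRad (F * S) < s) : specRad (T + F) < s := by
  have hS0 := apply_nonneg_of_hasSum_pow hT hS
  obtain ⟨y, hy, hQy⟩ := exists_pos_mulVec_lt_of_specRad_lt (mul_apply_nonneg_of_nonneg hF hS0) h
  set x := S *ᵥ y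
  have hTx : T *ᵥ x = x - y := by
    rw [mulVec_mulVec, hS.mul_eq_sub_one_of_pow, sub_mulVec, one_mulVec]
  have hyx : ∀ i, y i ≤ x i := fun i => by
    have := mulVec_nonneg_of_nonneg hT (mulVec_nonneg_of_nonneg hS0 fun i => (hy i).le) i
    rw [hTx] at this
    simpa using this
  refine specRad_lt_of_mulVec_lt (A := T + F) (fun i j => add_nonneg (hT i j) (hF i j))
    (fun i => (hy i).trans_le (hyx i)) (by linarith) fun i => ?_
  have h1 := hQy i
  rw [← mulVec_mulVec] at h1
  rw [add_mulVec, Pi.add_apply, hTx, Pi.sub_apply]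
  nlinarith [hy i, hyx i]

lemma specRad_mul_lt_of_smul_le_sum_range (hS : HasSum (T ^ ·) S) {c : ℝ} (hc : 0 < c) {N : ℕ}
    (hN : ∀ i j, c * S i j ≤ (∑ m ∈ Finset.range N, T ^ m) i j) {s : ℝ} (hs : 1 ≤ s)
    (h : specRad (T + F) < s) : specRad (F * S) < c⁻¹ * s ^ N := by
  obtain ⟨x, hx, hTFx⟩ := exists_pos_mulVec_lt_of_specRad_lt (A := T + F)
    (fun i j => add_nonneg (hT i j) (hF i j)) h
  set z := s • x - T *ᵥ x
  have hFx0 := mulVec_nonneg_of_nonneg hF fun i => (hx i).le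
  have hFz : ∀ i, (F *ᵥ x) i < z i := by
    intro i
    have := hTFx i
    rw [add_mulVec, Pi.add_apply] at this
    simp only [z, Pi.sub_apply, Pi.smul_apply, smul_eq_mul]
    linarith
  have hz0 : 0 ≤ z := fun i => (hFx0 i).trans (hFz i).le
  have hSz : c • (S *ᵥ z) ≤ s ^ N • x :=
    calc c • (S *ᵥ z) = (c • S) *ᵥ z := (smul_mulVec _ _ _).symm
      _ ≤ (∑ m ∈ Finset.range N, T ^ m) *ᵥ z := mulVec_le_mulVec_of_le hN hz0
      _ ≤ s ^ N • x := sum_range_pow_mulVec_le hT (fun i => (hx i).le) hs hz0 N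
  have hSz' : S *ᵥ z ≤ (c⁻¹ * s ^ N) • x := by
    rw [mul_smul, ← inv_smul_smul₀ hc.ne' (S *ᵥ z)]
    exact smul_le_smul_of_nonneg_left hSz (inv_nonneg.2 hc.le)
  refine specRad_lt_of_mulVec_lt
    (mul_apply_nonneg_of_nonneg hF (apply_nonneg_of_hasSum_pow hT hS))
    (x := z) (fun i => (hFx0 i).trans_lt (hFz i)) (by positivity) fun i => ?_
  calc ((F * S) *ᵥ z) i ≤ (F *ᵥ ((c⁻¹ * s ^ N) • x)) i := by
        rw [← mulVec_mulVec]; exact mulVec_mono_of_nonneg hF hSz' i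
    _ = (c⁻¹ * s ^ N) * (F *ᵥ x) i := by rw [mulVec_smul, Pi.smul_apply, smul_eq_mul]
    _ < (c⁻¹ * s ^ N) * z i := mul_lt_mul_of_pos_left (hFz i) (by positivity)

lemma specRad_mul_le_one_of_specRad_add_le_one (hS : HasSum (T ^ ·) S)
    (h : specRad (T + F) ≤ 1) : specRad (F * S) ≤ 1 := by
  refine le_of_forall_gt_imp_ge_of_dense fun t ht => ?_
  obtain ⟨c, htc, hc1⟩ := exists_between (inv_lt_one_of_one_lt₀ ht)
  have hc : 0 < c := (inv_pos.2 (by linarith)).trans htc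
  obtain ⟨N, hN⟩ := exists_smul_le_sum_range (pow_apply_nonneg hT) hS hc1
  have hct : (1 : ℝ) ^ N < c * t := by
    simpa [inv_mul_cancel₀ (by linarith : t ≠ 0)] using
      mul_lt_mul_of_pos_right htc (by linarith : 0 < t)
  obtain ⟨s, hsN, hs1⟩ : ∃ s, s ^ N < c * t ∧ 1 < s :=
    ((((continuous_pow N).tendsto 1).eventually_lt_const hct).filter_mono
      nhdsWithin_le_nhds |>.and self_mem_nhdsWithin).exists (f := 𝓝[>] (1 : ℝ))
  refine (specRad_mul_lt_of_smul_le_sum_range hT hF hS hc hN hs1.le (h.trans_lt hs1)).le.trans ?_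
  rw [inv_mul_le_iff₀ hc]
  exact hsN.le

lemma specRad_mul_le_specRad_add (hS : HasSum (T ^ ·) S) (h : specRad (T + F) ≤ 1) :
    specRad (F * S) ≤ specRad (T + F) := by
  rcases h.lt_or_eq with hlt | heq
  · refine le_of_forall_gt_imp_ge_of_dense fun s hs => ?_
    exact (specRad_mul_lt_of_specRad_add_lt hT hF hS (min_le_right s 1)
      (lt_min hs hlt)).le.trans (min_le_left _ _)
  · exact heq ▸ specRad_mul_le_one_of_specRad_add_le_one hT hF hS heq.le

lemma specRad_add_le_specRad_mul (hS : HasSum (T ^ ·) S) (h : 1 ≤ specRad (T + F)) :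
    specRad (T + F) ≤ specRad (F * S) := by
  by_contra! hlt
  have := specRad_add_lt_of_specRad_mul_lt hT hF hS (le_max_left 1 _)
    (lt_max_of_lt_right (left_lt_add_div_two.2 hlt))
  exact this.not_ge (max_le h (add_div_two_lt_right.2 hlt).le)

end Comparison

theorem cushing_yicang_general {n : ℕ} (T F : Matrix (Fin n) (Fin n) ℝ)
    (hT : ∀ i j, 0 ≤ T i j) (hF : ∀ i j, 0 ≤ F i j)
    (hρ : specRad T < 1)
    (r : ℝ) (hr : r = specRad (T + F))
    (R₀ : ℝ) (hR : R₀ = specRad (F * (1 - T)⁻¹)) :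
    (r = 1 ∧ R₀ = 1) ∨ (1 < r ∧ r ≤ R₀) ∨ (0 ≤ R₀ ∧ R₀ ≤ r ∧ r < 1) := by
  have hS := hasSum_pow_inv_one_sub hρ
  subst hr hR
  rcases lt_trichotomy (specRad (T + F)) 1 with hlt | heq | hgt
  · exact .inr <| .inr ⟨specRad_nonneg _, specRad_mul_le_specRad_add hT hF hS hlt.le, hlt⟩
  · refine .inl ⟨heq, le_antisymm ?_ ?_⟩
    · exact heq ▸ specRad_mul_le_specRad_add hT hF hS heq.le
    · exact heq ▸ specRad_add_le_specRad_mul hT hF hS heq.ge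
  · exact .inr <| .inl ⟨hgt, specRad_add_le_specRad_mul hT hF hS hgt.le⟩
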